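/- (Inverse scale space decomposition, case n = 2) Let u_{λ_1}, u_{λ_2} be K-normalised singular vectors with singular values λ_1, λ_2 (λ_j K*K u_{λ_j} ∈ ∂J(u_{λ_j}), ‖Ku_{λ_j}‖ = 1), satisfying ⟨Ku_{λ_1}, Ku_{λ_2}⟩ = 0 and the SUB0 condition λ_1K*Ku_{λ_1} ∈ ∂J(0), λ_1K*Ku_{λ_1} + λ_2K*Ku_{λ_2} ∈ ∂J(0). Let f = γ_1 Ku_{λ_1} + γ_2 Ku_{λ_2} with γ_1, γ_2 > 0 and t_1 := λ_1/γ_1 < t_2 := λ_2/γ_2. Define u(t) = 0 for t < t_1, u(t) = γ_1 u_{λ_1} for t_1 ≤ t < t_2, u(t) = γ_1 u_{λ_1} + γ_2 u_{λ_2} for t ≥ t_2, and p(t) = t K*f for t < t_1, p(t) = λ_1K*Ku_{λ_1} + t γ_2 K*Ku_{λ_2} for t_1 ≤ t < t_2, p(t) = λ_1K*Ku_{λ_1} + λ_2K*Ku_{λ_2} for t ≥ t_2. Then p(t) ∈ ∂J(u(t)) for all t ≥ 0 and ∂ₜ p(t) = K*(f − Ku(t)) on each interval, i.e. (u, p) solves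 the inverse scale space flow. -/

import Mathlib

open RealInnerProductSpace

/-- The subdifferential of `J` at `u`. -/
def subdiff {U : Type*} [NormedAddCommGroup U] [NormedSpace ℝ U]
    (J : U → ℝ) (u : U) : Set (U →L[ℝ] ℝ) :=
  {p | ∀ v : U, J u + p (v - u) ≤ J v}

/-- The Banach adjoint `K*` applied to `w ∈ H`. -/
noncomputable def Kstar {U H : Type*} [NormedAddCommGroup U] [NormedSpace ℝ U]
    [NormedAddCommGroup H] [InnerProductSpace ℝ H]
    (K : U →L[ℝ] H) (w : H) : U →L[ℝ] ℝ :=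
  ((innerSL ℝ) w).comp K

/-!
For an absolutely one-homogeneous convex `J`, a functional `p ∈ ∂J(0)` with `J u ≤ p u` lies in
`∂J(u)`. With `qᵢ = λᵢ K*K uᵢ`, the dual path is `p(t) = a q₁ + b q₂` with `0 ≤ b ≤ a ≤ 1`, so it
stays in the triangle with vertices `0`, `q₁`, `q₁ + q₂`, which lies in the convex set `∂J(0)` by
the SUB0 condition and `J ≥ 0`. Since `J(uᵢ) = λᵢ` and `(K*K uᵢ) uⱼ = δᵢⱼ`, subadditivity of `J`
gives `J(u(t)) ≤ p(t)(u(t))`: the component `γᵢ uᵢ` is switched on only once the coefficient of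
`qᵢ` in `p(t)` has saturated at `1`. On each open interval `p` is affine with slope
`K*(f - K u(t))`.
-/

open Set

section Subdifferential

variable {U : Type*} [NormedAddCommGroup U] [NormedSpace ℝ U] {J : U → ℝ}

theorem convex_subdiff (J : U → ℝ) (u : U) : Convex ℝ (subdiff J u) := by
  intro p hp q hq a b ha hb hab v
  calc J u + (a • p + b • q) (v - u) = a * (J u + p (v - u)) + b * (J u + q (v - u)) := by
        simp only [add_apply, smul_apply, smul_eq_mul]
        linear_combination -(J u) * hab
    _ ≤ a * J v + b * J v := by gcongr; exacts [hp v, hq v]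
    _ = J v := by rw [← add_mul, hab, one_mul]

theorem zero_mem_subdiff_iff {u : U} : 0 ∈ subdiff J u ↔ ∀ v, J u ≤ J v := by
  simp [subdiff]

theorem mem_subdiff_of_mem_subdiff_zero (hJ0 : J 0 = 0) {p : U →L[ℝ] ℝ} {u : U}
    (hp : p ∈ subdiff J 0) (hpu : J u ≤ p u) : p ∈ subdiff J u := by
  intro v
  have := hp v
  rw [hJ0, sub_zero, zero_add] at this
  rw [map_sub]
  linarith

end Subdifferential

section Homogeneous

variable {U : Type*} [AddCommGroup U] [Module ℝ U] {J : U → ℝ}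

theorem map_zero_of_abs_homogeneous (hhom : ∀ (c : ℝ) (x : U), J (c • x) = |c| * J x) :
    J 0 = 0 := by
  simpa using hhom 0 0

theorem add_le_of_convexOn_of_abs_homogeneous (hconv : ConvexOn ℝ univ J)
    (hhom : ∀ (c : ℝ) (x : U), J (c • x) = |c| * J x) (x y : U) :
    J (x + y) ≤ J x + J y := by
  have hmid := hconv.2 (mem_univ x) (mem_univ y) (by norm_num : (0 : ℝ) ≤ 1 / 2)
    (by norm_num : (0 : ℝ) ≤ 1 / 2) (by norm_num)
  calc J (x + y) = 2 * J ((1 / 2 : ℝ) • x + (1 / 2 : ℝ) • y) := by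
        rw [← abs_two, ← hhom, smul_add, smul_smul, smul_smul]
        norm_num
    _ ≤ J x + J y := by
        simp only [smul_eq_mul] at hmid
        linarith

theorem nonneg_of_convexOn_of_abs_homogeneous (hconv : ConvexOn ℝ univ J)
    (hhom : ∀ (c : ℝ) (x : U), J (c • x) = |c| * J x) (x : U) : 0 ≤ J x := by
  have h := add_le_of_convexOn_of_abs_homogeneous hconv hhom x (-x)
  rw [add_neg_cancel, map_zero_of_abs_homogeneous hhom, ← neg_one_smul ℝ x, hhom] at h
  simp only [abs_neg, abs_one, one_mul] at h
  linarith

theorem smul_add_smul_le_of_convexOn_of_abs_homogeneous (hconv : ConvexOn ℝ univ J)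
    (hhom : ∀ (c : ℝ) (x : U), J (c • x) = |c| * J x) {a b : ℝ} (ha : 0 ≤ a) (hb : 0 ≤ b)
    (x y : U) : J (a • x + b • y) ≤ a * J x + b * J y := by
  have h := add_le_of_convexOn_of_abs_homogeneous hconv hhom (a • x) (b • y)
  rwa [hhom, hhom, abs_of_nonneg ha, abs_of_nonneg hb] at h

end Homogeneous

theorem Convex.smul_add_smul_mem_of_le {E : Type*} [AddCommGroup E] [Module ℝ E] {S : Set E}
    (hS : Convex ℝ S) {x y : E} (h0 : 0 ∈ S) (hx : x ∈ S) (hxy : x + y ∈ S) {a b : ℝ}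
    (hb : 0 ≤ b) (hba : b ≤ a) (ha : a ≤ 1) : a • x + b • y ∈ S := by
  rcases (hb.trans hba).eq_or_lt with rfl | ha0
  · obtain rfl : b = 0 := le_antisymm hba hb
    simpa using h0
  · have hmem := hS.add_smul_mem hx hxy ⟨div_nonneg hb ha0.le, div_le_one_of_le₀ hba ha0.le⟩
    convert hS.smul_mem_of_zero_mem h0 hmem ⟨ha0.le, ha⟩ using 1
    rw [smul_add, smul_smul, mul_div_cancel₀ _ ha0.ne']

section PiecewiseDerivative

variable {F : Type*} [NormedAddCommGroup F] [NormedSpace ℝ F] {g₁ g₂ : ℝ → F} {d : F} {a t : ℝ}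

theorem HasDerivAt.ite_lt_of_lt (h : HasDerivAt g₁ d t) (ht : t < a) :
    HasDerivAt (fun s => if s < a then g₁ s else g₂ s) d t :=
  h.congr_of_eventuallyEq <| by
    filter_upwards [Iio_mem_nhds ht] with s hs
    exact if_pos hs

theorem HasDerivAt.ite_lt_of_gt (h : HasDerivAt g₂ d t) (ht : a < t) :
    HasDerivAt (fun s => if s < a then g₁ s else g₂ s) d t :=
  h.congr_of_eventuallyEq <| by
    filter_upwards [Ioi_mem_nhds ht] with s hs
    exact if_neg (lt_asymm hs)

end PiecewiseDerivative

theorem smul_add_smul_mem_subdiff {U : Type*} [NormedAddCommGroup U] [NormedSpace ℝ U]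
    {J : U → ℝ} (hconv : ConvexOn ℝ univ J) (hhom : ∀ (c : ℝ) (x : U), J (c • x) = |c| * J x)
    {q₁ q₂ : U →L[ℝ] ℝ} {u₁ u₂ : U} (hq₁ : q₁ ∈ subdiff J 0) (hq₁₂ : q₁ + q₂ ∈ subdiff J 0)
    (h₁₁ : q₁ u₁ = J u₁) (h₂₂ : q₂ u₂ = J u₂) (h₁₂ : q₁ u₂ = 0) (h₂₁ : q₂ u₁ = 0)
    {a b c₁ c₂ : ℝ} (hb : 0 ≤ b) (hba : b ≤ a) (ha : a ≤ 1) (hc₁ : 0 ≤ c₁) (hc₂ : 0 ≤ c₂)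
    (hac : c₁ = 0 ∨ a = 1) (hbc : c₂ = 0 ∨ b = 1) :
    a • q₁ + b • q₂ ∈ subdiff J (c₁ • u₁ + c₂ • u₂) := by
  have hJ0 := map_zero_of_abs_homogeneous hhom
  have h0 : (0 : U →L[ℝ] ℝ) ∈ subdiff J 0 := zero_mem_subdiff_iff.mpr fun v =>
    hJ0 ▸ nonneg_of_convexOn_of_abs_homogeneous hconv hhom v
  refine mem_subdiff_of_mem_subdiff_zero hJ0
    ((convex_subdiff J 0).smul_add_smul_mem_of_le h0 hq₁ hq₁₂ hb hba ha) ?_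
  calc J (c₁ • u₁ + c₂ • u₂) ≤ c₁ * J u₁ + c₂ * J u₂ :=
        smul_add_smul_le_of_convexOn_of_abs_homogeneous hconv hhom hc₁ hc₂ u₁ u₂
    _ = a * c₁ * J u₁ + b * c₂ * J u₂ := by
        rcases hac with rfl | rfl <;> rcases hbc with rfl | rfl <;> ring
    _ = (a • q₁ + b • q₂) (c₁ • u₁ + c₂ • u₂) := by
        simp only [add_apply, smul_apply, map_add, map_smul, h₁₁, h₂₂, h₁₂, h₂₁, smul_eq_mul]
        ring

section InverseScaleSpace

variable {U H : Type*} [NormedAddCommGroup U] [NormedSpace ℝ U]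
  [NormedAddCommGroup H] [InnerProductSpace ℝ H]

@[simp]
theorem Kstar_apply (K : U →L[ℝ] H) (w : H) (v : U) : Kstar K w v = ⟪w, K v⟫ := rfl

theorem Kstar_smul (K : U →L[ℝ] H) (c : ℝ) (w : H) : Kstar K (c • w) = c • Kstar K w := by
  ext v
  simp [real_inner_smul_left]

theorem Kstar_add (K : U →L[ℝ] H) (w w' : H) : Kstar K (w + w') = Kstar K w + Kstar K w' := by
  ext v
  simp [inner_add_left]

theorem Kstar_zero (K : U →L[ℝ] H) : Kstar K 0 = 0 := by
  ext v
  simp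

noncomputable def issPrimal (u₁ u₂ : U) (lam₁ lam₂ γ₁ γ₂ t : ℝ) : U :=
  if t < lam₁ / γ₁ then 0 else if t < lam₂ / γ₂ then γ₁ • u₁ else γ₁ • u₁ + γ₂ • u₂

noncomputable def issDual (K : U →L[ℝ] H) (u₁ u₂ : U) (lam₁ lam₂ γ₁ γ₂ t : ℝ) : U →L[ℝ] ℝ :=
  if t < lam₁ / γ₁ then t • Kstar K (γ₁ • K u₁ + γ₂ • K u₂)
  else if t < lam₂ / γ₂ then lam₁ • Kstar K (K u₁) + (t * γ₂) • Kstar K (K u₂)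
  else lam₁ • Kstar K (K u₁) + lam₂ • Kstar K (K u₂)

theorem issDual_mem_subdiff_issPrimal (K : U →L[ℝ] H) {J : U → ℝ}
    (hconv : ConvexOn ℝ univ J) (hhom : ∀ (c : ℝ) (x : U), J (c • x) = |c| * J x)
    {u₁ u₂ : U} {lam₁ lam₂ : ℝ} (hnorm₁ : ‖K u₁‖ = 1) (hnorm₂ : ‖K u₂‖ = 1)
    (hlam₁ : lam₁ = J u₁) (hlam₂ : lam₂ = J u₂) (horth : ⟪K u₁, K u₂⟫ = 0)
    (hSUB1 : lam₁ • Kstar K (K u₁) ∈ subdiff J 0)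
    (hSUB2 : lam₁ • Kstar K (K u₁) + lam₂ • Kstar K (K u₂) ∈ subdiff J 0)
    {γ₁ γ₂ t : ℝ} (hγ₁ : 0 < γ₁) (hγ₂ : 0 < γ₂) (hord : lam₁ / γ₁ < lam₂ / γ₂) (ht : 0 ≤ t) :
    issDual K u₁ u₂ lam₁ lam₂ γ₁ γ₂ t ∈ subdiff J (issPrimal u₁ u₂ lam₁ lam₂ γ₁ γ₂ t) := by
  have hlam₁_nonneg : 0 ≤ lam₁ := hlam₁ ▸ nonneg_of_convexOn_of_abs_homogeneous hconv hhom u₁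
  have hlam₂_pos : 0 < lam₂ :=
    (div_pos_iff_of_pos_right hγ₂).mp ((div_nonneg hlam₁_nonneg hγ₁.le).trans_lt hord)
  have h₁₁ : (lam₁ • Kstar K (K u₁)) u₁ = J u₁ := by simp [hnorm₁, hlam₁]
  have h₂₂ : (lam₂ • Kstar K (K u₂)) u₂ = J u₂ := by simp [hnorm₂, hlam₂]
  have h₁₂ : (lam₁ • Kstar K (K u₁)) u₂ = 0 := by simp [horth]
  have h₂₁ : (lam₂ • Kstar K (K u₂)) u₁ = 0 := by simp [real_inner_comm, horth]
  unfold issDual issPrimal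
  rcases lt_or_ge t (lam₁ / γ₁) with h₁ | h₁
  · have hlam₁_pos : 0 < lam₁ := (div_pos_iff_of_pos_right hγ₁).mp (ht.trans_lt h₁)
    have hp : t • Kstar K (γ₁ • K u₁ + γ₂ • K u₂) =
        (t * γ₁ / lam₁) • lam₁ • Kstar K (K u₁) + (t * γ₂ / lam₂) • lam₂ • Kstar K (K u₂) := by
      simp only [Kstar_add, Kstar_smul, smul_add, smul_smul]
      congr 2 <;> field_simp
    have hba : t * γ₂ / lam₂ ≤ t * γ₁ / lam₁ := by
      rw [div_le_div_iff₀ hlam₂_pos hlam₁_pos]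
      have := (div_lt_div_iff₀ hγ₁ hγ₂).mp hord
      nlinarith
    have ha : t * γ₁ / lam₁ ≤ 1 := (div_le_one hlam₁_pos).mpr ((lt_div_iff₀ hγ₁).mp h₁).le
    rw [if_pos h₁, if_pos h₁, hp, show (0 : U) = (0 : ℝ) • u₁ + (0 : ℝ) • u₂ by simp]
    exact smul_add_smul_mem_subdiff hconv hhom hSUB1 hSUB2 h₁₁ h₂₂ h₁₂ h₂₁ (by positivity) hba ha
      le_rfl le_rfl (Or.inl rfl) (Or.inl rfl)
  rcases lt_or_ge t (lam₂ / γ₂) with h₂ | h₂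
  · have hp : lam₁ • Kstar K (K u₁) + (t * γ₂) • Kstar K (K u₂) =
        (1 : ℝ) • lam₁ • Kstar K (K u₁) + (t * γ₂ / lam₂) • lam₂ • Kstar K (K u₂) := by
      rw [one_smul, smul_smul, div_mul_cancel₀ _ hlam₂_pos.ne']
    have hb : t * γ₂ / lam₂ ≤ 1 := (div_le_one hlam₂_pos).mpr ((lt_div_iff₀ hγ₂).mp h₂).le
    rw [if_neg h₁.not_gt, if_neg h₁.not_gt, if_pos h₂, if_pos h₂, hp,
      show γ₁ • u₁ = γ₁ • u₁ + (0 : ℝ) • u₂ by simp]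
    exact smul_add_smul_mem_subdiff hconv hhom hSUB1 hSUB2 h₁₁ h₂₂ h₁₂ h₂₁ (by positivity) hb
      le_rfl hγ₁.le le_rfl (Or.inr rfl) (Or.inl rfl)
  · rw [if_neg h₁.not_gt, if_neg h₁.not_gt, if_neg h₂.not_gt, if_neg h₂.not_gt]
    simpa using smul_add_smul_mem_subdiff hconv hhom hSUB1 hSUB2 h₁₁ h₂₂ h₁₂ h₂₁
      (a := 1) (b := 1) (c₁ := γ₁) (c₂ := γ₂) zero_le_one le_rfl le_rfl hγ₁.le hγ₂.le
      (Or.inr rfl) (Or.inr rfl)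

theorem hasDerivAt_issDual (K : U →L[ℝ] H) (u₁ u₂ : U) {lam₁ lam₂ γ₁ γ₂ t : ℝ}
    (ht₁ : t ≠ lam₁ / γ₁) (ht₂ : t ≠ lam₂ / γ₂) :
    HasDerivAt (issDual K u₁ u₂ lam₁ lam₂ γ₁ γ₂)
      (Kstar K (γ₁ • K u₁ + γ₂ • K u₂ - K (issPrimal u₁ u₂ lam₁ lam₂ γ₁ γ₂ t))) t := by
  unfold issDual issPrimal
  rcases ht₁.lt_or_gt with h₁ | h₁
  · rw [if_pos h₁, map_zero, sub_zero]
    refine HasDerivAt.ite_lt_of_lt ?_ h₁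
    simpa using (hasDerivAt_id t).smul_const (Kstar K (γ₁ • K u₁ + γ₂ • K u₂))
  rcases ht₂.lt_or_gt with h₂ | h₂
  · have hres : γ₁ • K u₁ + γ₂ • K u₂ - K (γ₁ • u₁) = γ₂ • K u₂ := by simp
    rw [if_neg h₁.not_gt, if_pos h₂, hres, Kstar_smul]
    refine HasDerivAt.ite_lt_of_gt (HasDerivAt.ite_lt_of_lt ?_ h₂) h₁
    simpa using (((hasDerivAt_id t).mul_const γ₂).smul_const (Kstar K (K u₂))).const_add
      (lam₁ • Kstar K (K u₁))
  · rw [if_neg h₁.not_gt, if_neg h₂.not_gt, map_add, map_smul, map_smul, sub_self, Kstar_zero]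
    exact HasDerivAt.ite_lt_of_gt (HasDerivAt.ite_lt_of_gt (hasDerivAt_const _ _) h₂) h₁

end InverseScaleSpace

theorem iss_decomposition_two_singular_vectors_general
    {U H : Type*} [NormedAddCommGroup U] [NormedSpace ℝ U]
    [NormedAddCommGroup H] [InnerProductSpace ℝ H]
    (K : U →L[ℝ] H) (J : U → ℝ)
    (hconv : ConvexOn ℝ Set.univ J)
    (hhom : ∀ (c : ℝ) (x : U), J (c • x) = |c| * J x)
    (u₁ u₂ : U) (lam₁ lam₂ : ℝ)
    (hnorm₁ : ‖K u₁‖ = 1) (hnorm₂ : ‖K u₂‖ = 1)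
    (hlam₁ : lam₁ = J u₁) (hlam₂ : lam₂ = J u₂)
    (horth : ⟪K u₁, K u₂⟫ = 0)
    (hSUB1 : lam₁ • Kstar K (K u₁) ∈ subdiff J 0)
    (hSUB2 : lam₁ • Kstar K (K u₁) + lam₂ • Kstar K (K u₂) ∈ subdiff J 0)
    (γ₁ γ₂ : ℝ) (hγ₁ : 0 < γ₁) (hγ₂ : 0 < γ₂)
    (hord : lam₁ / γ₁ < lam₂ / γ₂)
    (f : H) (hf : f = γ₁ • K u₁ + γ₂ • K u₂)
    (uflow : ℝ → U) (pflow : ℝ → (U →L[ℝ] ℝ))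
    (huflow : uflow = fun t =>
      if t < lam₁ / γ₁ then 0
      else if t < lam₂ / γ₂ then γ₁ • u₁
      else γ₁ • u₁ + γ₂ • u₂)
    (hpflow : pflow = fun t =>
      if t < lam₁ / γ₁ then t • Kstar K f
      else if t < lam₂ / γ₂ then
        lam₁ • Kstar K (K u₁) + (t * γ₂) • Kstar K (K u₂)
      else lam₁ • Kstar K (K u₁) + lam₂ • Kstar K (K u₂)) :
    (∀ t : ℝ, 0 ≤ t → pflow t ∈ subdiff J (uflow t)) ∧
    (∀ t : ℝ, 0 ≤ t → t ≠ lam₁ / γ₁ → t ≠ lam₂ / γ₂ →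
      HasDerivAt pflow (Kstar K (f - K (uflow t))) t) := by
  subst huflow hpflow hf
  exact ⟨fun t ht => issDual_mem_subdiff_issPrimal K hconv hhom hnorm₁ hnorm₂ hlam₁ hlam₂ horth
      hSUB1 hSUB2 hγ₁ hγ₂ hord ht,
    fun t _ h₁ h₂ => hasDerivAt_issDual K u₁ u₂ h₁ h₂⟩

/-- Inverse scale space decomposition for a sum of two singular vectors: the piecewise
constant primal variable together with the piecewise linear dual variable solves the
inverse scale space flow. -/
theorem iss_decomposition_two_singular_vectors
    {U H : Type*} [NormedAddCommGroup U] [NormedSpace ℝ U]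
    [NormedAddCommGroup H] [InnerProductSpace ℝ H]
    (K : U →L[ℝ] H) (J : U → ℝ)
    (hconv : ConvexOn ℝ Set.univ J)
    (hlsc : LowerSemicontinuous J)
    (hhom : ∀ (c : ℝ) (x : U), J (c • x) = |c| * J x)
    (u₁ u₂ : U) (lam₁ lam₂ : ℝ)
    (hsv₁ : lam₁ • Kstar K (K u₁) ∈ subdiff J u₁)
    (hsv₂ : lam₂ • Kstar K (K u₂) ∈ subdiff J u₂)
    (hnorm₁ : ‖K u₁‖ = 1) (hnorm₂ : ‖K u₂‖ = 1)
    (hlam₁ : lam₁ = J u₁) (hlam₂ : lam₂ = J u₂)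
    (horth : ⟪K u₁, K u₂⟫ = 0)
    (hSUB1 : lam₁ • Kstar K (K u₁) ∈ subdiff J 0)
    (hSUB2 : lam₁ • Kstar K (K u₁) + lam₂ • Kstar K (K u₂) ∈ subdiff J 0)
    (γ₁ γ₂ : ℝ) (hγ₁ : 0 < γ₁) (hγ₂ : 0 < γ₂)
    (hord : lam₁ / γ₁ < lam₂ / γ₂)
    (f : H) (hf : f = γ₁ • K u₁ + γ₂ • K u₂)
    (uflow : ℝ → U) (pflow : ℝ → (U →L[ℝ] ℝ))
    (huflow : uflow = fun t =>
      if t < lam₁ / γ₁ then 0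
      else if t < lam₂ / γ₂ then γ₁ • u₁
      else γ₁ • u₁ + γ₂ • u₂)
    (hpflow : pflow = fun t =>
      if t < lam₁ / γ₁ then t • Kstar K f
      else if t < lam₂ / γ₂ then
        lam₁ • Kstar K (K u₁) + (t * γ₂) • Kstar K (K u₂)
      else lam₁ • Kstar K (K u₁) + lam₂ • Kstar K (K u₂)) :
    (∀ t : ℝ, 0 ≤ t → pflow t ∈ subdiff J (uflow t)) ∧
    (∀ t : ℝ, 0 ≤ t → t ≠ lam₁ / γ₁ → t ≠ lam₂ / γ₂ →
      HasDerivAt pflow (Kstar K (f - K (uflow t))) t) :=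
  iss_decomposition_two_singular_vectors_general K J hconv hhom u₁ u₂ lam₁ lam₂ hnorm₁ hnorm₂ hlam₁
    hlam₂ horth hSUB1 hSUB2 γ₁ γ₂ hγ₁ hγ₂ hord f hf uflow pflow huflow hpflow
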